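/- arXiv:math/0603497 — 6 statements merged into one kernel-verified Lean document; each statement's English description precedes it below -/
import Mathlib

section
/- Let f be an absolutely continuous probability density on (0,∞) with finite Fisher information for scale I_s(f) = ∫ (1 + x f'(x)/f(x))² f(x) dx. Let G be any distribution function on (0,∞) and define h(x) = ∫₀^∞ (1/u) f(x/u) dG(u). Then I_s(h) ≤ I_s(f). -/
/-!
Fix `x > 0` and put `φ u = f (x/u) / u`, `s u = (f (x/u) + (x/u) f' (x/u)) / u`.
Then `h = ∫ φ dG`, `h + x h' = ∫ s dG`, and the integrand of `I_s(h)` at `x` is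
`(∫ s)² / ∫ φ`. By Cauchy–Schwarz this is at most `∫ s²/φ dG = ∫ ρ (x/u) / u dG`, where `ρ` is
the integrand of `I_s(f)`. Integrating in `x`, each `u > 0` contributes
`∫ ρ (x/u) / u dx = ∫ ρ`. Since `f'` is only an a.e. derivative and `f` is only a.e.
measurable, null sets are transported along `(x, u) ↦ x/u`, which is quasi-measure-preserving
from Lebesgue measure times `G` to Lebesgue measure.
-/

open MeasureTheory Set

theorem quasiMeasurePreserving_div_prod {G : Measure ℝ} [SFinite G]
    (hG : ∀ᵐ u ∂G, u ≠ 0) :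
    Measure.QuasiMeasurePreserving (fun z : ℝ × ℝ => z.1 / z.2) (volume.prod G) volume := by
  have hm : Measurable fun z : ℝ × ℝ => z.1 / z.2 := by fun_prop
  refine ⟨hm, Measure.AbsolutelyContinuous.mk fun s hs hs0 => ?_⟩
  rw [Measure.map_apply hm hs, Measure.prod_apply_symm (hm hs)]
  refine lintegral_eq_zero_of_ae_eq_zero ?_
  filter_upwards [hG] with u hu
  change volume ((· * u⁻¹) ⁻¹' s) = 0
  rw [Real.volume_preimage_mul_right (inv_ne_zero hu), hs0, mul_zero]

/-- For `G` concentrated on `(0, ∞)`: the density of `X * Y`, where `X` has density `g` and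
`Y ∼ G` is independent of `X`. -/
noncomputable def scaleMixture (G : Measure ℝ) (g : ℝ → ℝ) (x : ℝ) : ℝ :=
  ∫ u, 1 / u * g (x / u) ∂G

section ScaleMixture

variable {G : Measure ℝ} {g : ℝ → ℝ}

theorem scaleMixture_nonneg (hG : ∀ᵐ u ∂G, 0 < u) (hg : ∀ t, 0 ≤ g t) (x : ℝ) :
    0 ≤ scaleMixture G g x :=
  integral_nonneg_of_ae (hG.mono fun u hu => mul_nonneg (by positivity) (hg _))

theorem integrable_prod_div [IsFiniteMeasure G] (hG : ∀ᵐ u ∂G, u ≠ 0) (hg : Integrable g) :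
    Integrable (fun z : ℝ × ℝ => 1 / z.2 * g (z.1 / z.2)) (volume.prod G) := by
  have hmeas :
      AEStronglyMeasurable (fun z : ℝ × ℝ => 1 / z.2 * g (z.1 / z.2)) (volume.prod G) :=
    (measurable_snd.const_div 1).aestronglyMeasurable.mul
      (hg.aestronglyMeasurable.comp_quasiMeasurePreserving (quasiMeasurePreserving_div_prod hG))
  refine (integrable_prod_iff' hmeas).2 ⟨?_, (integrable_const (∫ t, ‖g t‖)).congr ?_⟩
  · filter_upwards [hG] with u hu
    exact (hg.comp_div hu).const_mul _
  · filter_upwards [hG] with u hu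
    simp_rw [norm_mul]
    rw [integral_const_mul, Measure.integral_comp_div (fun t => ‖g t‖), smul_eq_mul,
      ← mul_assoc, norm_div, norm_one, Real.norm_eq_abs, one_div_mul_cancel (abs_ne_zero.2 hu),
      one_mul]

theorem integral_scaleMixture [IsFiniteMeasure G] (hG : ∀ᵐ u ∂G, 0 < u) (hg : Integrable g) :
    ∫ x, scaleMixture G g x = G.real univ * ∫ t, g t := by
  unfold scaleMixture
  rw [integral_integral_swap (integrable_prod_div (hG.mono fun _ hu => hu.ne') hg),
    ← smul_eq_mul, ← integral_const]
  refine integral_congr_ae ?_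
  filter_upwards [hG] with u hu
  rw [integral_const_mul, Measure.integral_comp_div, smul_eq_mul, abs_of_pos hu, ← mul_assoc,
    one_div_mul_cancel hu.ne', one_mul]

theorem scaleMixture_indicator_Ioi (hG : ∀ᵐ u ∂G, 0 < u) {x : ℝ} (hx : 0 < x) :
    scaleMixture G ((Ioi 0).indicator g) x = scaleMixture G g x := by
  refine integral_congr_ae ?_
  filter_upwards [hG] with u hu
  rw [indicator_of_mem (mem_Ioi.2 (div_pos hx hu))]

theorem scaleMixture_indicator_Ioi_of_nonpos (hG : ∀ᵐ u ∂G, 0 < u) {x : ℝ} (hx : x ≤ 0) :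
    scaleMixture G ((Ioi 0).indicator g) x = 0 := by
  refine integral_eq_zero_of_ae ?_
  filter_upwards [hG] with u hu
  rw [indicator_of_notMem (notMem_Ioi.2 (div_nonpos_of_nonpos_of_nonneg hx hu.le)), mul_zero,
    Pi.zero_apply]

theorem ae_integrable_of_integrableOn_Ioi [IsFiniteMeasure G] (hG : ∀ᵐ u ∂G, 0 < u)
    (hg : IntegrableOn g (Ioi 0)) :
    ∀ᵐ x, 0 < x → Integrable (fun u => 1 / u * g (x / u)) G := by
  filter_upwards [(integrable_prod_div (hG.mono fun _ hu => hu.ne')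
    (hg.integrable_indicator measurableSet_Ioi)).prod_right_ae] with x hx hx0
  refine hx.congr ?_
  filter_upwards [hG] with u hu
  rw [indicator_of_mem (mem_Ioi.2 (div_pos hx0 hu))]

theorem integrableOn_Ioi_scaleMixture [IsFiniteMeasure G] (hG : ∀ᵐ u ∂G, 0 < u)
    (hg : IntegrableOn g (Ioi 0)) : IntegrableOn (scaleMixture G g) (Ioi 0) :=
  ((integrable_prod_div (hG.mono fun _ hu => hu.ne')
    (hg.integrable_indicator measurableSet_Ioi)).integral_prod_left.integrableOn).congr_fun
    (fun _ hx => scaleMixture_indicator_Ioi hG hx) measurableSet_Ioi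

theorem setIntegral_Ioi_scaleMixture [IsFiniteMeasure G] (hG : ∀ᵐ u ∂G, 0 < u)
    (hg : IntegrableOn g (Ioi 0)) :
    ∫ x in Ioi 0, scaleMixture G g x = G.real univ * ∫ x in Ioi 0, g x := by
  rw [← setIntegral_congr_fun measurableSet_Ioi fun x (hx : x ∈ Ioi 0) =>
      scaleMixture_indicator_Ioi hG hx,
    setIntegral_eq_integral_of_forall_compl_eq_zero fun x (hx : x ∉ Ioi 0) =>
      scaleMixture_indicator_Ioi_of_nonpos hG (notMem_Ioi.1 hx),
    integral_scaleMixture hG (hg.integrable_indicator measurableSet_Ioi),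
    integral_indicator measurableSet_Ioi]

end ScaleMixture

section WeightedSquare

variable {α : Type*} [MeasurableSpace α] {μ : Measure α} {s φ : α → ℝ}

theorem abs_le_sq_div_add {a b : ℝ} (hb : 0 ≤ b) (hab : b = 0 → a = 0) :
    |a| ≤ a ^ 2 / b + b := by
  rcases hb.eq_or_lt with rfl | hb
  · simp [hab rfl]
  · rw [div_add' _ _ _ hb.ne', le_div_iff₀ hb]
    nlinarith [sq_abs a, sq_nonneg (|a| - b), abs_nonneg a]

theorem integrable_of_integrable_sq_div (hs : AEStronglyMeasurable s μ) (hφ0 : 0 ≤ᵐ[μ] φ)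
    (hsφ : ∀ᵐ a ∂μ, φ a = 0 → s a = 0) (hφ : Integrable φ μ)
    (hsq : Integrable (fun a => s a ^ 2 / φ a) μ) : Integrable s μ := by
  refine (hsq.add hφ).mono' hs ?_
  filter_upwards [hφ0, hsφ] with a ha0 ha
  exact abs_le_sq_div_add ha0 ha

theorem sq_integral_le_integral_sq_div_mul_integral (hφ0 : 0 ≤ᵐ[μ] φ)
    (hsφ : ∀ᵐ a ∂μ, φ a = 0 → s a = 0) (hs : Integrable s μ) (hφ : Integrable φ μ)
    (hsq : Integrable (fun a => s a ^ 2 / φ a) μ) :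
    (∫ a, s a ∂μ) ^ 2 ≤ (∫ a, s a ^ 2 / φ a ∂μ) * ∫ a, φ a ∂μ := by
  -- the quadratic `c ↦ ∫ (s - c φ)² / φ` is nonnegative, so its discriminant is not positive
  have hquad : ∀ c : ℝ, 0 ≤ (∫ a, φ a ∂μ) * (c * c) + (-2 * ∫ a, s a ∂μ) * c
      + ∫ a, s a ^ 2 / φ a ∂μ := by
    intro c
    have hlin : Integrable (fun a => c ^ 2 * φ a - 2 * c * s a) μ :=
      (hφ.const_mul _).sub (hs.const_mul _)
    have hint : ∫ a, (c ^ 2 * φ a - 2 * c * s a + s a ^ 2 / φ a) ∂μ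
        = (∫ a, φ a ∂μ) * (c * c) + (-2 * ∫ a, s a ∂μ) * c + ∫ a, s a ^ 2 / φ a ∂μ := by
      rw [integral_add hlin hsq, integral_sub (hφ.const_mul _) (hs.const_mul _),
        integral_const_mul, integral_const_mul]
      ring
    rw [← hint]
    refine integral_nonneg_of_ae ?_
    filter_upwards [hφ0, hsφ] with a (ha0 : 0 ≤ φ a) ha
    rcases ha0.eq_or_lt with h0 | hpos
    · simp [← h0, ha h0.symm]
    · have : c ^ 2 * φ a - 2 * c * s a + s a ^ 2 / φ a = (s a - c * φ a) ^ 2 / φ a := by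
        field_simp; ring
      rw [Pi.zero_apply, this]
      positivity
  have hdiscrim := discrim_le_zero hquad
  rw [discrim] at hdiscrim
  linarith

theorem sq_one_add_mul_integral_div_mul_le {ψ : α → ℝ} {x : ℝ} (hx : x ≠ 0)
    (hφ0 : 0 ≤ᵐ[μ] φ) (hφψ : ∀ᵐ a ∂μ, φ a = 0 → ψ a = 0) (hφ : Integrable φ μ)
    (hs : Integrable (fun a => φ a + x * ψ a) μ)
    (hsq : Integrable (fun a => (φ a + x * ψ a) ^ 2 / φ a) μ) :
    (1 + x * (∫ a, ψ a ∂μ) / ∫ a, φ a ∂μ) ^ 2 * ∫ a, φ a ∂μ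
      ≤ ∫ a, (φ a + x * ψ a) ^ 2 / φ a ∂μ := by
  have hψ : Integrable ψ μ := ((hs.sub hφ).const_mul x⁻¹).congr <| .of_forall fun a => by
    simp only [Pi.sub_apply]; field_simp; ring
  have hsum : ∫ a, (φ a + x * ψ a) ∂μ = ∫ a, φ a ∂μ + x * ∫ a, ψ a ∂μ := by
    rw [integral_add hφ (hψ.const_mul x), integral_const_mul]
  have hcs := sq_integral_le_integral_sq_div_mul_integral hφ0
    (hφψ.mono fun a ha h0 => by rw [h0, ha h0, mul_zero, add_zero]) hs hφ hsq
  rcases (integral_nonneg_of_ae hφ0).eq_or_lt with h0 | hpos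
  · rw [← h0, mul_zero]
    exact integral_nonneg_of_ae (hφ0.mono fun a ha => div_nonneg (sq_nonneg _) ha)
  · calc (1 + x * (∫ a, ψ a ∂μ) / ∫ a, φ a ∂μ) ^ 2 * ∫ a, φ a ∂μ
        = (∫ a, (φ a + x * ψ a) ∂μ) ^ 2 / ∫ a, φ a ∂μ := by
          rw [hsum]; field_simp
      _ ≤ ∫ a, (φ a + x * ψ a) ^ 2 / φ a ∂μ := by rwa [div_le_iff₀ hpos]

end WeightedSquare

noncomputable def scaleFisherIntegrand (f f' : ℝ → ℝ) (x : ℝ) : ℝ :=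
  (1 + x * f' x / f x) ^ 2 * f x

section ScaleFisher

variable {f f' : ℝ → ℝ}

theorem ae_deriv_eq_zero_of_eq_zero (hf0 : ∀ x, 0 ≤ f x)
    (hderiv : ∀ᵐ x, HasDerivAt f (f' x) x) :
    ∀ᵐ x, f x = 0 → f' x = 0 :=
  hderiv.mono fun _ hx h0 => IsLocalMin.hasDerivAt_eq_zero (.of_forall fun y => h0 ▸ hf0 y) hx

-- both sides vanish where `f x = 0`, by the convention `y / 0 = 0`
theorem scaleFisherIntegrand_eq (x : ℝ) :
    scaleFisherIntegrand f f' x = (f x + x * f' x) ^ 2 / f x := by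
  rcases eq_or_ne (f x) 0 with h0 | hne
  · simp [scaleFisherIntegrand, h0]
  · unfold scaleFisherIntegrand
    field_simp

theorem integrableOn_add_mul_of_integrableOn_scaleFisherIntegrand (hf0 : ∀ x, 0 ≤ f x)
    (hderiv : ∀ᵐ x, HasDerivAt f (f' x) x) (hf : IntegrableOn f (Ioi 0))
    (hfin : IntegrableOn (scaleFisherIntegrand f f') (Ioi 0)) :
    IntegrableOn (fun x => f x + x * f' x) (Ioi 0) := by
  have hf' : f' =ᵐ[volume.restrict (Ioi 0)] deriv f :=
    ae_restrict_of_ae (hderiv.mono fun x hx => hx.deriv.symm)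
  refine integrable_of_integrable_sq_div (φ := f) ?_ (.of_forall hf0) (ae_restrict_of_ae ?_) hf
    (hfin.congr_fun (fun x _ => scaleFisherIntegrand_eq x) measurableSet_Ioi)
  · exact hf.aestronglyMeasurable.add
      ((measurable_id.mul (measurable_deriv f)).aestronglyMeasurable.congr
        (hf'.mono fun x hx => by simp only [Pi.mul_apply, id, hx]))
  · exact (ae_deriv_eq_zero_of_eq_zero hf0 hderiv).mono fun x hx h0 => by
      rw [h0, hx h0, mul_zero, add_zero]

theorem ae_scaleFisherIntegrand_scaleMixture_le {G : Measure ℝ} [IsFiniteMeasure G]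
    (hG : ∀ᵐ u ∂G, 0 < u) (hf0 : ∀ x, 0 ≤ f x) (hderiv : ∀ᵐ x, HasDerivAt f (f' x) x)
    (hf : IntegrableOn f (Ioi 0)) (hfin : IntegrableOn (scaleFisherIntegrand f f') (Ioi 0)) :
    ∀ᵐ x, 0 < x → scaleFisherIntegrand (scaleMixture G f)
        (fun x => ∫ u, 1 / u ^ 2 * f' (x / u) ∂G) x
      ≤ scaleMixture G (scaleFisherIntegrand f f') x := by
  have hk := integrableOn_add_mul_of_integrableOn_scaleFisherIntegrand hf0 hderiv hf hfin
  filter_upwards [ae_integrable_of_integrableOn_Ioi hG hf,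
    ae_integrable_of_integrableOn_Ioi hG hk, ae_integrable_of_integrableOn_Ioi hG hfin,
    Measure.ae_ae_of_ae_prod ((quasiMeasurePreserving_div_prod (G := G)
      (hG.mono fun _ hu => hu.ne')).ae (ae_deriv_eq_zero_of_eq_zero hf0 hderiv))]
    with x hφ hs hsq hz hx
  have hsum : ∀ u, 1 / u * f (x / u) + x * (1 / u ^ 2 * f' (x / u))
      = 1 / u * (f (x / u) + x / u * f' (x / u)) := fun u => by ring
  have hsq_div : ∀ u,
      (1 / u * f (x / u) + x * (1 / u ^ 2 * f' (x / u))) ^ 2 / (1 / u * f (x / u))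
        = 1 / u * scaleFisherIntegrand f f' (x / u) := fun u => by
    rw [hsum, scaleFisherIntegrand_eq, mul_pow, mul_div_mul_comm, sq (1 / u), mul_self_div_self]
  refine (sq_one_add_mul_integral_div_mul_le hx.ne' ?_ ?_ (hφ hx) ?_ ?_).trans_eq ?_
  · exact hG.mono fun u hu => mul_nonneg (by positivity) (hf0 _)
  · filter_upwards [hG, hz] with u hu hzu h0
    rw [hzu ((mul_eq_zero.1 h0).resolve_left (by positivity)), mul_zero]
  · simpa only [hsum] using hs hx
  · simpa only [hsq_div] using hsq hx
  · simp only [hsq_div]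
    rfl

end ScaleFisher

theorem stmt5_general (f f' : ℝ → ℝ) (hf0 : ∀ x, 0 ≤ f x)
    (hf1 : ∫ x in Ioi (0:ℝ), f x = 1)
    (hderiv : ∀ᵐ x, HasDerivAt f (f' x) x)
    (hfin : IntegrableOn (fun x => (1 + x * f' x / f x) ^ 2 * f x) (Ioi 0))
    (G : Measure ℝ) [IsProbabilityMeasure G] (hG : G (Ioi 0)ᶜ = 0)
    (h h' : ℝ → ℝ)
    (hh : ∀ x, h x = ∫ u, (1 / u) * f (x / u) ∂G)
    (hh' : ∀ x, h' x = ∫ u, (1 / u ^ 2) * f' (x / u) ∂G) :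
    ∫ x in Ioi (0:ℝ), (1 + x * h' x / h x) ^ 2 * h x
      ≤ ∫ x in Ioi (0:ℝ), (1 + x * f' x / f x) ^ 2 * f x := by
  obtain rfl : h = scaleMixture G f := funext hh
  obtain rfl : h' = fun x => ∫ u, 1 / u ^ 2 * f' (x / u) ∂G := funext hh'
  change IntegrableOn (scaleFisherIntegrand f f') (Ioi 0) at hfin
  have hGpos : ∀ᵐ u ∂G, 0 < u := mem_ae_iff.2 hG
  have hf : IntegrableOn f (Ioi 0) :=
    Integrable.of_integral_ne_zero (by rw [hf1]; exact one_ne_zero)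
  calc ∫ x in Ioi 0, scaleFisherIntegrand (scaleMixture G f) _ x
      ≤ ∫ x in Ioi 0, scaleMixture G (scaleFisherIntegrand f f') x :=
        integral_mono_of_nonneg
          (.of_forall fun x => mul_nonneg (sq_nonneg _) (scaleMixture_nonneg hGpos hf0 x))
          (integrableOn_Ioi_scaleMixture hGpos hfin)
          ((ae_restrict_iff' measurableSet_Ioi).2
            (ae_scaleFisherIntegrand_scaleMixture_le hGpos hf0 hderiv hf hfin))
    _ = ∫ x in Ioi 0, scaleFisherIntegrand f f' x := by
      rw [setIntegral_Ioi_scaleMixture hGpos hfin, probReal_univ, one_mul]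

/-- Multiplication by an independent positive factor decreases Fisher information
for scale: if `h(x) = ∫ (1/u) f(x/u) dG(u)` then `I_s(h) ≤ I_s(f)`. -/
theorem stmt5 (f f' : ℝ → ℝ) (hf0 : ∀ x, 0 ≤ f x) (hsupp : ∀ x ≤ 0, f x = 0)
    (hf1 : ∫ x in Ioi (0:ℝ), f x = 1)
    (hderiv : ∀ᵐ x, HasDerivAt f (f' x) x)
    (hfin : IntegrableOn (fun x => (1 + x * f' x / f x) ^ 2 * f x) (Ioi 0))
    (G : Measure ℝ) [IsProbabilityMeasure G] (hG : G (Ioi 0)ᶜ = 0)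
    (h h' : ℝ → ℝ)
    (hh : ∀ x, h x = ∫ u, (1 / u) * f (x / u) ∂G)
    (hh' : ∀ x, h' x = ∫ u, (1 / u ^ 2) * f' (x / u) ∂G) :
    ∫ x in Ioi (0:ℝ), (1 + x * h' x / h x) ^ 2 * h x
      ≤ ∫ x in Ioi (0:ℝ), (1 + x * f' x / f x) ^ 2 * f x :=
  stmt5_general f f' hf0 hf1 hderiv hfin G hG h h' hh hh'
end

section
/- Let g₀ be the Weibull density with shape parameter γ > 0, g₀(t) = γ t^{γ−1} e^{−t^γ} for t ≥ 0, with mean μ. Then the Fisher information for scale of the length-biased density f₁(x) = x g₀(x)/μ equals γ(γ+1). -/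
/-!
Under `u = x ^ γ` the Weibull law becomes the standard exponential law, and the length-biased
density `f₁` becomes the Gamma density `u ^ (1/γ) e^(-u) / Γ(1/γ + 1)`, of shape `1/γ + 1`.
The scale score of `f₁` is `1 + x f₁'/f₁ = 1 + γ (1 - x ^ γ) = γ ((1/γ + 1) - u)`, so the Fisher
information is `γ²` times the variance `1/γ + 1` of that Gamma law, i.e. `γ (γ + 1)`.
-/

open MeasureTheory Set Real

section GammaMoments

variable {a : ℝ}

lemma Gamma_add_one_eq_integral (ha : -1 < a) :
    Gamma (a + 1) = ∫ u in Ioi (0:ℝ), exp (-u) * u ^ a := by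
  rw [Gamma_eq_integral (by linarith), add_sub_cancel_right]

lemma integrableOn_exp_neg_mul_rpow (ha : -1 < a) :
    IntegrableOn (fun u : ℝ => exp (-u) * u ^ a) (Ioi 0) := by
  simpa using GammaIntegral_convergent (s := a + 1) (by linarith)

/-- The variance of the Gamma distribution with shape `a + 1`, before normalisation. -/
lemma integral_exp_neg_mul_sq_sub_mul_rpow (ha : -1 < a) :
    ∫ u in Ioi (0:ℝ), exp (-u) * ((u - (a + 1)) ^ 2 * u ^ a) = (a + 1) * Gamma (a + 1) := by
  have hexpand : ∀ u ∈ Ioi (0:ℝ), exp (-u) * ((u - (a + 1)) ^ 2 * u ^ a) =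
      exp (-u) * u ^ (a + 2) - 2 * (a + 1) * (exp (-u) * u ^ (a + 1))
        + (a + 1) ^ 2 * (exp (-u) * u ^ a) := by
    intro u hu
    rw [rpow_add hu, rpow_add hu, rpow_two, rpow_one]
    ring
  have I₀ := integrableOn_exp_neg_mul_rpow ha
  have I₁ := integrableOn_exp_neg_mul_rpow (a := a + 1) (by linarith)
  have I₂ := integrableOn_exp_neg_mul_rpow (a := a + 2) (by linarith)
  have I₂₁ : IntegrableOn
      (fun u : ℝ => exp (-u) * u ^ (a + 2) - 2 * (a + 1) * (exp (-u) * u ^ (a + 1))) (Ioi 0) :=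
    I₂.sub (I₁.const_mul _)
  rw [setIntegral_congr_fun measurableSet_Ioi hexpand,
    integral_add I₂₁ (I₀.const_mul _), integral_sub I₂ (I₁.const_mul _),
    integral_const_mul, integral_const_mul, ← Gamma_add_one_eq_integral ha,
    ← Gamma_add_one_eq_integral (by linarith), ← Gamma_add_one_eq_integral (by linarith),
    show a + 2 + 1 = a + 1 + 1 + 1 by ring, Gamma_add_one (by linarith),
    Gamma_add_one (by linarith)]
  ring

end GammaMoments

section Weibull

variable {γ : ℝ}

noncomputable def weibullPDF (γ t : ℝ) : ℝ := γ * t ^ (γ - 1) * exp (-t ^ γ)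

lemma mul_weibullPDF {t : ℝ} (ht : 0 < t) : t * weibullPDF γ t = γ * t ^ γ * exp (-t ^ γ) := by
  rw [weibullPDF, rpow_sub_one ht.ne']
  field_simp

lemma hasDerivAt_mul_weibullPDF {x : ℝ} (hx : 0 < x) :
    HasDerivAt (fun t => t * weibullPDF γ t) (γ * (1 - x ^ γ) * weibullPDF γ x) x := by
  have hpow : HasDerivAt (fun t => t ^ γ) (γ * x ^ (γ - 1)) x :=
    hasDerivAt_rpow_const (Or.inl hx.ne')
  have hderiv := (hpow.const_mul γ).mul hpow.neg.exp
  refine (hderiv.congr_of_eventuallyEq ?_).congr_deriv ?_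
  · filter_upwards [isOpen_Ioi.mem_nhds hx] with t ht
    exact mul_weibullPDF ht
  · simp only [Pi.neg_apply, weibullPDF, rpow_sub_one hx.ne']
    ring

/-- A Weibull variable is `U ^ (1 / γ)` with `U` standard exponential. -/
lemma integral_weibullPDF_mul_comp_rpow (hγ : 0 < γ) (h : ℝ → ℝ) :
    ∫ t in Ioi (0:ℝ), weibullPDF γ t * h (t ^ γ) = ∫ u in Ioi (0:ℝ), exp (-u) * h u := by
  rw [← integral_comp_rpow_Ioi_of_pos (g := fun u => exp (-u) * h u) hγ]
  simp only [weibullPDF, smul_eq_mul, mul_assoc]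

lemma integral_mul_weibullPDF (hγ : 0 < γ) :
    ∫ t in Ioi (0:ℝ), t * weibullPDF γ t = Gamma (γ⁻¹ + 1) := by
  have hcomp : ∀ t ∈ Ioi (0:ℝ), t * weibullPDF γ t = weibullPDF γ t * (t ^ γ) ^ γ⁻¹ := by
    intro t ht
    rw [rpow_rpow_inv (le_of_lt ht) hγ.ne', mul_comm]
  rw [setIntegral_congr_fun measurableSet_Ioi hcomp,
    integral_weibullPDF_mul_comp_rpow hγ fun u => u ^ γ⁻¹,
    Gamma_add_one_eq_integral (by linarith [inv_pos.2 hγ])]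

end Weibull

/-- For the Weibull density `g₀(t) = γ t^(γ−1) e^(−t^γ)` with mean `μ`, the Fisher
information for scale of the length-biased density `f₁(x) = x g₀(x)/μ` equals `γ(γ+1)`. -/
theorem stmt11 (γ : ℝ) (hγ : 0 < γ)
    (g₀ : ℝ → ℝ) (hg₀ : ∀ t > (0:ℝ), g₀ t = γ * t ^ (γ - 1) * Real.exp (-(t ^ γ)))
    (μ : ℝ) (hμ : μ = ∫ t in Ioi (0:ℝ), t * g₀ t)
    (f₁ f₁' : ℝ → ℝ) (hf₁ : ∀ x, f₁ x = x * g₀ x / μ)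
    (hderiv : ∀ x ∈ Ioi (0:ℝ), HasDerivAt f₁ (f₁' x) x) :
    ∫ x in Ioi (0:ℝ), (1 + x * f₁' x / f₁ x) ^ 2 * f₁ x = γ * (γ + 1) := by
  have hμ_eq : μ = Gamma (γ⁻¹ + 1) := by
    rw [hμ, ← integral_mul_weibullPDF hγ]
    exact setIntegral_congr_fun measurableSet_Ioi fun t ht => by rw [hg₀ t ht, weibullPDF]
  have hμ_pos : 0 < μ := hμ_eq ▸ Gamma_pos_of_pos (by positivity)
  have hf₁_eq : ∀ x ∈ Ioi (0:ℝ), f₁ x = x * weibullPDF γ x / μ := fun x hx => by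
    rw [hf₁, hg₀ x hx, weibullPDF]
  have hf₁' : ∀ x ∈ Ioi (0:ℝ), f₁' x = γ * (1 - x ^ γ) * weibullPDF γ x / μ := fun x hx =>
    (hderiv x hx).unique (((hasDerivAt_mul_weibullPDF hx).div_const μ).congr_of_eventuallyEq
      (Filter.eventuallyEq_of_mem (isOpen_Ioi.mem_nhds hx) hf₁_eq))
  have hintegrand : ∀ x ∈ Ioi (0:ℝ), (1 + x * f₁' x / f₁ x) ^ 2 * f₁ x =
      γ ^ 2 / μ * (weibullPDF γ x * ((x ^ γ - (γ⁻¹ + 1)) ^ 2 * (x ^ γ) ^ γ⁻¹)) := by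
    intro x (hx : 0 < x)
    have hw : 0 < weibullPDF γ x := by unfold weibullPDF; positivity
    rw [hf₁_eq x hx, hf₁' x hx, rpow_rpow_inv hx.le hγ.ne']
    field_simp
    ring
  rw [setIntegral_congr_fun measurableSet_Ioi hintegrand, integral_const_mul,
    integral_weibullPDF_mul_comp_rpow hγ fun u => (u - (γ⁻¹ + 1)) ^ 2 * u ^ γ⁻¹,
    integral_exp_neg_mul_sq_sub_mul_rpow (by linarith [inv_pos.2 hγ]), ← hμ_eq]
  field_simp
  ring
end

section
/- Let g₀ be the Weibull density with shape parameter γ > 0, g₀(t) = γ t^{γ−1} e^{−t^γ}, with survival function Ḡ₀(t) = e^{−t^γ} and mean μ. Then the Fisher information for scale of the current-duration density f₂(x) = Ḡ₀(x)/μ equals γ. -/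
/-!
The score for scale is `1 + x f₂'(x) / f₂(x) = 1 - γ x^γ`, so the
Fisher information is `(1/μ) ∫ (1 - γ x^γ)² e^{-x^γ} dx`. Every term is a Gamma integral
`∫ x^q e^{-x^γ} dx = Γ((q+1)/γ) / γ`; with `A = Γ(1/γ + 1)` the three terms give
`A - 2A + (γ + 1) A = γ A`, while the mean is `μ = A`.
-/

open MeasureTheory Set Real

section WeibullMoments

variable {γ : ℝ}

lemma integral_rpow_mul_exp_neg_rpow_self (hγ : 0 < γ) :
    ∫ x in Ioi (0 : ℝ), x ^ γ * exp (-x ^ γ) = Gamma (1 / γ + 1) / γ := by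
  rw [integral_rpow_mul_exp_neg_rpow hγ (by linarith), add_div, div_self hγ.ne', add_comm]
  ring

lemma integral_rpow_two_mul_mul_exp_neg_rpow (hγ : 0 < γ) :
    ∫ x in Ioi (0 : ℝ), x ^ (2 * γ) * exp (-x ^ γ) = (1 / γ + 1) * Gamma (1 / γ + 1) / γ := by
  rw [integral_rpow_mul_exp_neg_rpow hγ (by linarith),
    show (2 * γ + 1) / γ = 1 / γ + 1 + 1 by field_simp; ring, Gamma_add_one (by positivity)]
  ring

lemma integral_one_sub_mul_rpow_sq_mul_exp_neg_rpow (hγ : 0 < γ) :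
    ∫ x in Ioi (0 : ℝ), (1 - γ * x ^ γ) ^ 2 * exp (-x ^ γ) = γ * Gamma (1 / γ + 1) := by
  have expand : ∀ x ∈ Ioi (0 : ℝ), (1 - γ * x ^ γ) ^ 2 * exp (-x ^ γ)
      = exp (-x ^ γ) - 2 * γ * (x ^ γ * exp (-x ^ γ))
        + γ ^ 2 * (x ^ (2 * γ) * exp (-x ^ γ)) := fun x hx => by
    rw [two_mul γ, rpow_add hx]
    ring
  have int_exp : IntegrableOn (fun x : ℝ => exp (-x ^ γ)) (Ioi 0) := by
    simpa using integrableOn_rpow_mul_exp_neg_rpow (s := 0) (by norm_num) hγ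
  have int_rpow (q : ℝ) (hq : 0 ≤ q) :
      IntegrableOn (fun x : ℝ => x ^ q * exp (-x ^ γ)) (Ioi 0) :=
    integrableOn_rpow_mul_exp_neg_rpow (by linarith) hγ
  rw [setIntegral_congr_fun measurableSet_Ioi expand, integral_add, integral_sub,
    integral_const_mul, integral_const_mul, integral_exp_neg_rpow hγ,
    integral_rpow_mul_exp_neg_rpow_self hγ, integral_rpow_two_mul_mul_exp_neg_rpow hγ]
  · field_simp
    ring
  · exact int_exp
  · exact (int_rpow γ hγ.le).const_mul _
  · exact int_exp.sub ((int_rpow γ hγ.le).const_mul _)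
  · exact (int_rpow (2 * γ) (by positivity)).const_mul _

lemma integral_mul_weibull_density (hγ : 0 < γ) :
    ∫ t in Ioi (0 : ℝ), t * (γ * t ^ (γ - 1) * exp (-t ^ γ)) = Gamma (1 / γ + 1) := by
  have h : ∀ t ∈ Ioi (0 : ℝ), t * (γ * t ^ (γ - 1) * exp (-t ^ γ))
      = γ * (t ^ γ * exp (-t ^ γ)) := fun t (ht : 0 < t) => by
    rw [rpow_sub_one ht.ne']
    field_simp
  rw [setIntegral_congr_fun measurableSet_Ioi h, integral_const_mul,
    integral_rpow_mul_exp_neg_rpow_self hγ]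
  field_simp

lemma hasDerivAt_exp_neg_rpow {x : ℝ} (hx : 0 < x) :
    HasDerivAt (fun x : ℝ => exp (-x ^ γ)) (exp (-x ^ γ) * -(γ * x ^ (γ - 1))) x :=
  (hasDerivAt_rpow_const (Or.inl hx.ne')).neg.exp

end WeibullMoments

/-- For the Weibull density with shape `γ > 0` and survival function `Ḡ₀(t) = e^(−t^γ)`,
the Fisher information for scale of the current-duration density `f₂(x) = Ḡ₀(x)/μ`
equals `γ`. -/
theorem stmt12 (γ : ℝ) (hγ : 0 < γ)
    (g₀ : ℝ → ℝ) (hg₀ : ∀ t > (0:ℝ), g₀ t = γ * t ^ (γ - 1) * Real.exp (-(t ^ γ)))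
    (μ : ℝ) (hμ : μ = ∫ t in Ioi (0:ℝ), t * g₀ t)
    (f₂ f₂' : ℝ → ℝ) (hf₂ : ∀ x, f₂ x = Real.exp (-(x ^ γ)) / μ)
    (hderiv : ∀ x ∈ Ioi (0:ℝ), HasDerivAt f₂ (f₂' x) x) :
    ∫ x in Ioi (0:ℝ), (1 + x * f₂' x / f₂ x) ^ 2 * f₂ x = γ := by
  have hμ_eq : μ = Gamma (1 / γ + 1) := by
    rw [hμ, ← integral_mul_weibull_density hγ]
    exact setIntegral_congr_fun measurableSet_Ioi fun t ht => by rw [hg₀ t ht]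
  have hμ_pos : 0 < μ := hμ_eq ▸ Gamma_pos_of_pos (by positivity)
  have hf₂' : ∀ x ∈ Ioi (0 : ℝ), f₂' x = exp (-x ^ γ) * -(γ * x ^ (γ - 1)) / μ := fun x hx =>
    (hderiv x hx).unique <| funext hf₂ ▸ (hasDerivAt_exp_neg_rpow hx).div_const μ
  have integrand : ∀ x ∈ Ioi (0 : ℝ), (1 + x * f₂' x / f₂ x) ^ 2 * f₂ x
      = (1 - γ * x ^ γ) ^ 2 * exp (-x ^ γ) / μ := fun x (hx : 0 < x) => by
    rw [hf₂' x hx, hf₂, rpow_sub_one hx.ne']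
    field_simp
    ring
  rw [setIntegral_congr_fun measurableSet_Ioi integrand, integral_div,
    integral_one_sub_mul_rpow_sq_mul_exp_neg_rpow hγ, ← hμ_eq]
  field_simp
end

section
/- Let g₀ be the log-logistic density with parameter γ > 1, g₀(t) = γ t^{γ−1}/(1+t^γ)², with mean μ. Then the Fisher information for scale of the length-biased density f₁(x) = x g₀(x)/μ equals (γ²−1)/3. -/
/-!
Write `F x = x^γ / (1 + x^γ)` for the log-logistic CDF. Then `x g₀(x) = γ F (1 - F)`, so the
length-biased density is `f₁ = γ F (1 - F) / μ`, and since `x F' = γ F (1 - F)` its scale score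
is `1 + x f₁'/f₁ = 1 + γ - 2γF`. The Fisher information is therefore
`(γ/μ) ∫ F (1 - F) (1 + γ - 2γF)²`, while `μ = γ ∫ F (1 - F)`. The two integrals differ by the
factor `(γ² - 1)/3` because `F (1 - F) ((1 + γ - 2γF)² - (γ² - 1)/3)` has the explicit
antiderivative `x P(F x)` for a cubic `P` divisible by `s (1 - s)`, which vanishes at `0` and,
as `γ > 1`, at `∞`.
-/

open MeasureTheory Set Real Filter Topology Polynomial

noncomputable def logLogisticCDF (γ x : ℝ) : ℝ := x ^ γ / (1 + x ^ γ)

section LogLogisticCDF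

variable {γ x : ℝ}

lemma one_sub_logLogisticCDF (hx : 0 ≤ x) : 1 - logLogisticCDF γ x = 1 / (1 + x ^ γ) := by
  have : 0 < 1 + x ^ γ := by positivity
  rw [logLogisticCDF]
  field_simp
  ring

lemma logLogisticCDF_nonneg (hx : 0 ≤ x) : 0 ≤ logLogisticCDF γ x := by
  unfold logLogisticCDF; positivity

lemma logLogisticCDF_le_one (hx : 0 ≤ x) : logLogisticCDF γ x ≤ 1 := by
  have := one_sub_logLogisticCDF (γ := γ) hx
  have : 0 ≤ 1 / (1 + x ^ γ) := by positivity
  linarith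

lemma logLogisticCDF_pos (hx : 0 < x) : 0 < logLogisticCDF γ x := by
  unfold logLogisticCDF; positivity

lemma logLogisticCDF_lt_one (hx : 0 ≤ x) : logLogisticCDF γ x < 1 := by
  have := one_sub_logLogisticCDF (γ := γ) hx
  have : 0 < 1 / (1 + x ^ γ) := by positivity
  linarith

lemma logLogisticCDF_mul_one_sub_pos (hx : 0 < x) :
    0 < logLogisticCDF γ x * (1 - logLogisticCDF γ x) :=
  mul_pos (logLogisticCDF_pos hx) (sub_pos.2 (logLogisticCDF_lt_one hx.le))

lemma measurable_logLogisticCDF : Measurable (logLogisticCDF γ) := by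
  unfold logLogisticCDF; fun_prop

lemma continuousAt_logLogisticCDF (hγ : 0 < γ) (hx : 0 ≤ x) :
    ContinuousAt (logLogisticCDF γ) x := by
  have hpow := continuousAt_rpow_const x γ (Or.inr hγ.le)
  exact hpow.div (continuousAt_const.add hpow) (by positivity)

lemma hasDerivAt_logLogisticCDF (hx : 0 < x) :
    HasDerivAt (logLogisticCDF γ)
      (γ * logLogisticCDF γ x * (1 - logLogisticCDF γ x) / x) x := by
  have hpow : HasDerivAt (fun y : ℝ => y ^ γ) (γ * x ^ γ / x) x := by
    convert hasDerivAt_rpow_const (p := γ) (Or.inl hx.ne') using 1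
    rw [rpow_sub hx, rpow_one, mul_div_assoc]
  have hT : 0 < 1 + x ^ γ := by positivity
  refine (hpow.div (hpow.const_add 1) hT.ne').congr_deriv ?_
  rw [one_sub_logLogisticCDF hx.le, logLogisticCDF]
  field_simp
  ring

lemma hasDerivAt_logLogisticCDF_mul_one_sub (hx : 0 < x) :
    HasDerivAt (fun y => logLogisticCDF γ y * (1 - logLogisticCDF γ y))
      (γ * (logLogisticCDF γ x * (1 - logLogisticCDF γ x)) *
        (1 - 2 * logLogisticCDF γ x) / x) x := by
  have hF := hasDerivAt_logLogisticCDF (γ := γ) hx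
  exact (hF.mul (hF.const_sub 1)).congr_deriv (by ring)

lemma mul_logLogisticDensity (hx : 0 < x) :
    x * (γ * x ^ (γ - 1) / (1 + x ^ γ) ^ 2) =
      γ * (logLogisticCDF γ x * (1 - logLogisticCDF γ x)) := by
  have hT : 0 < 1 + x ^ γ := by positivity
  rw [one_sub_logLogisticCDF hx.le, logLogisticCDF, rpow_sub hx, rpow_one]
  field_simp

lemma tendsto_logLogisticCDF_atTop (hγ : 0 < γ) :
    Tendsto (logLogisticCDF γ) atTop (𝓝 1) := by
  have h : Tendsto (fun x : ℝ => 1 / (1 + x ^ γ)) atTop (𝓝 0) :=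
    tendsto_const_nhds.div_atTop
      (tendsto_atTop_add_const_left _ _ (tendsto_rpow_atTop hγ))
  have h' := (tendsto_const_nhds (x := (1 : ℝ))).sub h
  rw [sub_zero] at h'
  refine h'.congr' ?_
  filter_upwards [eventually_ge_atTop 0] with x hx
  rw [← one_sub_logLogisticCDF hx, sub_sub_cancel]

lemma tendsto_mul_one_sub_logLogisticCDF_atTop (hγ : 1 < γ) :
    Tendsto (fun x => x * (1 - logLogisticCDF γ x)) atTop (𝓝 0) := by
  have hdecay : Tendsto (fun x : ℝ => x ^ (-(γ - 1))) atTop (𝓝 0) :=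
    tendsto_rpow_neg_atTop (by linarith)
  refine tendsto_of_tendsto_of_tendsto_of_le_of_le' tendsto_const_nhds hdecay ?_ ?_
  all_goals filter_upwards [eventually_gt_atTop 0] with x hx
  · exact mul_nonneg hx.le (sub_nonneg.2 (logLogisticCDF_le_one hx.le))
  · have hu : 0 < x ^ γ := by positivity
    rw [one_sub_logLogisticCDF hx.le, neg_sub, rpow_sub hx, rpow_one, mul_one_div,
      div_le_div_iff_of_pos_left hx (by positivity) hu]
    linarith

lemma integrableOn_logLogisticCDF_mul_one_sub (hγ : 1 < γ) :
    IntegrableOn (fun x => logLogisticCDF γ x * (1 - logLogisticCDF γ x)) (Ioi 0) := by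
  have hmeas : Measurable fun x => logLogisticCDF γ x * (1 - logLogisticCDF γ x) := by
    have := measurable_logLogisticCDF (γ := γ); fun_prop
  have hbound {x : ℝ} (hx : 0 < x) :
      ‖logLogisticCDF γ x * (1 - logLogisticCDF γ x)‖ ≤ 1 - logLogisticCDF γ x := by
    have h0 := logLogisticCDF_nonneg (γ := γ) hx.le
    have h1 := logLogisticCDF_le_one (γ := γ) hx.le
    rw [Real.norm_eq_abs, abs_of_nonneg (by nlinarith)]
    nlinarith
  rw [← Ioc_union_Ioi_eq_Ioi zero_le_one]
  refine IntegrableOn.union ?_ ?_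
  · refine Integrable.mono' (integrable_const 1) hmeas.aestronglyMeasurable ?_
    filter_upwards [ae_restrict_mem measurableSet_Ioc] with x hx
    exact (hbound hx.1).trans (by linarith [logLogisticCDF_nonneg (γ := γ) hx.1.le])
  · refine Integrable.mono' (integrableOn_Ioi_rpow_of_lt (by linarith : -γ < -1) one_pos)
      hmeas.aestronglyMeasurable ?_
    filter_upwards [ae_restrict_mem measurableSet_Ioi] with x (hx : 1 < x)
    have hx0 : 0 < x := one_pos.trans hx
    refine (hbound hx0).trans ?_
    rw [one_sub_logLogisticCDF hx0.le, rpow_neg hx0.le, ← one_div]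
    gcongr
    linarith

lemma integrableOn_logLogisticCDF_mul_one_sub_mul_comp (hγ : 1 < γ) {h : ℝ → ℝ}
    (hh : Continuous h) :
    IntegrableOn (fun x => logLogisticCDF γ x * (1 - logLogisticCDF γ x) *
      h (logLogisticCDF γ x)) (Ioi 0) := by
  obtain ⟨C, hC⟩ := isCompact_Icc.exists_bound_of_continuousOn (hh.continuousOn (s := Icc 0 1))
  refine (integrableOn_logLogisticCDF_mul_one_sub hγ).mul_bdd (c := C)
    (hh.measurable.comp measurable_logLogisticCDF).aestronglyMeasurable ?_
  filter_upwards [ae_restrict_mem measurableSet_Ioi] with x (hx : 0 < x)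
  exact hC _ ⟨logLogisticCDF_nonneg hx.le, logLogisticCDF_le_one hx.le⟩

lemma hasDerivAt_mul_eval_logLogisticCDF (P : ℝ[X]) (hx : 0 < x) :
    HasDerivAt (fun y => y * P.eval (logLogisticCDF γ y))
      (P.eval (logLogisticCDF γ x) + γ * logLogisticCDF γ x * (1 - logLogisticCDF γ x) *
        P.derivative.eval (logLogisticCDF γ x)) x := by
  refine ((hasDerivAt_id x).mul
    ((P.hasDerivAt _).comp x (hasDerivAt_logLogisticCDF hx))).congr_deriv ?_
  simp only [id, one_mul, Function.comp_apply]
  field_simp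

lemma integral_logLogisticCDF_mul_one_sub_mul_score_sq_sub (hγ : 1 < γ) :
    ∫ x in Ioi 0, logLogisticCDF γ x * (1 - logLogisticCDF γ x) *
      ((1 + γ - 2 * γ * logLogisticCDF γ x) ^ 2 - (γ ^ 2 - 1) / 3) = 0 := by
  have hγ0 : 0 < γ := one_pos.trans hγ
  set R : ℝ[X] := C (2 * γ * (γ + 2) / 3) * (1 - X) - C (2 * γ * (γ - 2) / 3) * X
  set P : ℝ[X] := X * (1 - X) * R
  have hPq (s : ℝ) : P.eval s + γ * s * (1 - s) * P.derivative.eval s =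
      γ * (s * (1 - s) * ((1 + γ - 2 * γ * s) ^ 2 - (γ ^ 2 - 1) / 3)) := by
    simp only [P, R, eval_mul, eval_sub, eval_C, eval_X, eval_one, derivative_mul,
      derivative_sub, derivative_X, derivative_one, derivative_C, eval_add, eval_zero]
    ring
  have hlim : Tendsto (fun y => y * P.eval (logLogisticCDF γ y)) atTop (𝓝 0) := by
    have hF := tendsto_logLogisticCDF_atTop hγ0
    have h := (tendsto_mul_one_sub_logLogisticCDF_atTop hγ).mul
      (hF.mul ((R.continuous.tendsto 1).comp hF))
    rw [zero_mul] at h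
    refine h.congr fun y => ?_
    simp only [P, eval_mul, eval_sub, eval_one, eval_X, Function.comp_apply]
    ring
  -- `x ↦ x P(F x)` is an antiderivative of `γ` times the integrand, by `hPq`.
  have hFTC := integral_Ioi_of_hasDerivAt_of_tendsto
    ((continuousAt_id.mul ((P.continuous.continuousAt).comp
      (continuousAt_logLogisticCDF hγ0 le_rfl))).continuousWithinAt)
    (fun x hx => (hasDerivAt_mul_eval_logLogisticCDF P hx).congr_deriv (hPq _))
    ((integrableOn_logLogisticCDF_mul_one_sub_mul_comp hγ
      (h := fun s => (1 + γ - 2 * γ * s) ^ 2 - (γ ^ 2 - 1) / 3) (by fun_prop)).const_mul γ) hlim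
  simp only [integral_const_mul, Pi.mul_apply, id, zero_mul, sub_zero, mul_eq_zero] at hFTC
  exact hFTC.resolve_left hγ0.ne'

lemma integral_logLogisticCDF_mul_one_sub_mul_score_sq (hγ : 1 < γ) :
    ∫ x in Ioi 0, logLogisticCDF γ x * (1 - logLogisticCDF γ x) *
      (1 + γ - 2 * γ * logLogisticCDF γ x) ^ 2 =
    (γ ^ 2 - 1) / 3 * ∫ x in Ioi 0, logLogisticCDF γ x * (1 - logLogisticCDF γ x) := by
  have h := integral_logLogisticCDF_mul_one_sub_mul_score_sq_sub hγ
  simp only [fun x => mul_sub (logLogisticCDF γ x * (1 - logLogisticCDF γ x))] at h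
  rw [integral_sub ((integrableOn_logLogisticCDF_mul_one_sub_mul_comp hγ
      (h := fun s => (1 + γ - 2 * γ * s) ^ 2) (by fun_prop)))
    ((integrableOn_logLogisticCDF_mul_one_sub hγ).mul_const _), integral_mul_const,
    sub_eq_zero] at h
  rw [h, mul_comm]

lemma integral_logLogisticCDF_mul_one_sub_pos (hγ : 1 < γ) :
    0 < ∫ x in Ioi 0, logLogisticCDF γ x * (1 - logLogisticCDF γ x) := by
  have hpos : ∀ x ∈ Ioi (0 : ℝ), 0 < logLogisticCDF γ x * (1 - logLogisticCDF γ x) :=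
    fun x hx => logLogisticCDF_mul_one_sub_pos hx
  have hsupp : Function.support (fun x => logLogisticCDF γ x * (1 - logLogisticCDF γ x)) ∩ Ioi 0
      = Ioi 0 := inter_eq_right.2 fun x hx => (hpos x hx).ne'
  rw [setIntegral_pos_iff_support_of_nonneg_ae
    ((ae_restrict_mem measurableSet_Ioi).mono fun x hx => (hpos x hx).le)
    (integrableOn_logLogisticCDF_mul_one_sub hγ), hsupp, volume_Ioi]
  exact ENNReal.zero_lt_top

lemma one_add_mul_div_sq_mul_eq_of_eventuallyEq {f : ℝ → ℝ} {f' c : ℝ} (hc : c ≠ 0)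
    (hx : 0 < x) (hf : f =ᶠ[𝓝 x] fun y => c * (logLogisticCDF γ y * (1 - logLogisticCDF γ y)))
    (hf' : HasDerivAt f f' x) :
    (1 + x * f' / f x) ^ 2 * f x = c * (logLogisticCDF γ x * (1 - logLogisticCDF γ x) *
      (1 + γ - 2 * γ * logLogisticCDF γ x) ^ 2) := by
  have hderiv := hf'.unique
    (((hasDerivAt_logLogisticCDF_mul_one_sub hx).const_mul c).congr_of_eventuallyEq hf)
  have hF := (logLogisticCDF_pos (γ := γ) hx).ne'
  have h1F := (sub_pos.2 (logLogisticCDF_lt_one (γ := γ) hx.le)).ne'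
  have hscore : x * f' / f x = γ * (1 - 2 * logLogisticCDF γ x) := by
    rw [hderiv, hf.eq_of_nhds]
    field_simp
  rw [hscore, hf.eq_of_nhds]
  ring

end LogLogisticCDF

/-- For the log-logistic density `g₀(t) = γ t^(γ−1)/(1+t^γ)²` with `γ > 1` and mean `μ`,
the Fisher information for scale of the length-biased density `f₁(x) = x g₀(x)/μ`
equals `(γ²−1)/3`. -/
theorem stmt13 (γ : ℝ) (hγ : 1 < γ)
    (g₀ : ℝ → ℝ) (hg₀ : ∀ t > (0:ℝ), g₀ t = γ * t ^ (γ - 1) / (1 + t ^ γ) ^ 2)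
    (μ : ℝ) (hμ : μ = ∫ t in Ioi (0:ℝ), t * g₀ t)
    (f₁ f₁' : ℝ → ℝ) (hf₁ : ∀ x, f₁ x = x * g₀ x / μ)
    (hderiv : ∀ x ∈ Ioi (0:ℝ), HasDerivAt f₁ (f₁' x) x) :
    ∫ x in Ioi (0:ℝ), (1 + x * f₁' x / f₁ x) ^ 2 * f₁ x = (γ ^ 2 - 1) / 3 := by
  have hI := (integral_logLogisticCDF_mul_one_sub_pos hγ).ne'
  have hμI : μ = γ * ∫ x in Ioi 0, logLogisticCDF γ x * (1 - logLogisticCDF γ x) := by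
    rw [hμ, ← integral_const_mul]
    exact setIntegral_congr_fun measurableSet_Ioi fun t ht => by
      rw [hg₀ t ht, mul_logLogisticDensity ht]
  have hμ0 : μ ≠ 0 := hμI ▸ mul_ne_zero (by linarith) hI
  have hf₁_nhds {x : ℝ} (hx : 0 < x) :
      f₁ =ᶠ[𝓝 x] fun y => γ / μ * (logLogisticCDF γ y * (1 - logLogisticCDF γ y)) :=
    (eventually_gt_nhds hx).mono fun y hy => by
      rw [hf₁, hg₀ y hy, mul_logLogisticDensity hy]; ring
  have hintegrand : EqOn (fun x => (1 + x * f₁' x / f₁ x) ^ 2 * f₁ x)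
      (fun x => γ / μ * (logLogisticCDF γ x * (1 - logLogisticCDF γ x) *
        (1 + γ - 2 * γ * logLogisticCDF γ x) ^ 2)) (Ioi 0) := fun x (hx : 0 < x) =>
    one_add_mul_div_sq_mul_eq_of_eventuallyEq (div_ne_zero (by linarith) hμ0) hx
      (hf₁_nhds hx) (hderiv x hx)
  rw [setIntegral_congr_fun measurableSet_Ioi hintegrand, integral_const_mul,
    integral_logLogisticCDF_mul_one_sub_mul_score_sq hγ, hμI]
  field_simp
end

section
/- Let g₀ be the log-logistic density with parameter γ > 1, g₀(t) = γ t^{γ−1}/(1+t^γ)², with survival function Ḡ₀(t) = 1/(1+t^γ) and mean μ. Then the Fisher information for scale of the current-duration density f₂(x) = Ḡ₀(x)/μ equals (γ−1)/2. -/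
/-!
Write `t = x ^ γ`. Then `x f₂'/f₂ = -γt/(1+t)`, so `μ` times the integrand is
`(1 + (1-γ)t)² / (1+t)³`, while `μ = ∫ x g₀(x) dx = ∫ γt/(1+t)² dx`. The difference
`(1 + (1-γ)t)²/(1+t)³ - (γ-1)/2 · γt/(1+t)²` is the derivative of `x (1 + (1-γ/2)t) / (1+t)²`,
which vanishes at `0` and at `∞`, so the integral equals `(γ-1)/2 · μ / μ`. All integrands are
`O(1/(1+x^γ))`, which is integrable for `γ > 1`.
-/

open MeasureTheory Set Real Filter Topology

namespace LogLogistic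

variable {γ x : ℝ}

noncomputable def momentIntegrand (γ x : ℝ) : ℝ := γ * x ^ γ / (1 + x ^ γ) ^ 2

noncomputable def fisherIntegrand (γ x : ℝ) : ℝ := (1 + (1 - γ) * x ^ γ) ^ 2 / (1 + x ^ γ) ^ 3

noncomputable def fisherPrimitive (γ x : ℝ) : ℝ := x * (1 + (1 - γ / 2) * x ^ γ) / (1 + x ^ γ) ^ 2

lemma integrableOn_inv_one_add_rpow (hγ : 1 < γ) :
    IntegrableOn (fun x : ℝ => (1 + x ^ γ)⁻¹) (Ioi 0) := by
  have hmeas : AEStronglyMeasurable (fun x : ℝ => (1 + x ^ γ)⁻¹) :=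
    (measurable_id.pow_const γ).const_add 1 |>.inv.aestronglyMeasurable
  rw [← Ioc_union_Ioi_eq_Ioi zero_le_one]
  refine .union (Measure.integrableOn_of_bounded (M := 1) (by simp) hmeas ?_)
    (Integrable.mono' (integrableOn_Ioi_rpow_of_lt (neg_lt_neg hγ) one_pos) hmeas.restrict ?_)
  · filter_upwards [ae_restrict_mem measurableSet_Ioc] with x hx
    have : 0 ≤ x ^ γ := rpow_nonneg hx.1.le γ
    rw [norm_inv, Real.norm_of_nonneg (by positivity)]
    exact inv_le_one_of_one_le₀ (by linarith)
  · filter_upwards [ae_restrict_mem measurableSet_Ioi] with x (hx : 1 < x)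
    have : 0 < x ^ γ := rpow_pos_of_pos (one_pos.trans hx) γ
    rw [norm_inv, Real.norm_of_nonneg (by positivity), rpow_neg (by linarith)]
    exact inv_anti₀ this (by linarith)

lemma norm_momentIntegrand_le (hγ : 0 ≤ γ) (hx : 0 ≤ x) :
    ‖momentIntegrand γ x‖ ≤ γ * (1 + x ^ γ)⁻¹ := by
  have ht : 0 ≤ x ^ γ := rpow_nonneg hx γ
  rw [momentIntegrand, Real.norm_of_nonneg (by positivity), div_le_iff₀ (by positivity)]
  field_simp
  nlinarith [mul_nonneg hγ ht]

lemma norm_fisherIntegrand_le (hγ : 1 ≤ γ) (hx : 0 ≤ x) :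
    ‖fisherIntegrand γ x‖ ≤ γ ^ 2 * (1 + x ^ γ)⁻¹ := by
  have ht : 0 ≤ x ^ γ := rpow_nonneg hx γ
  have hsq : (1 + (1 - γ) * x ^ γ) ^ 2 ≤ (γ * (1 + x ^ γ)) ^ 2 :=
    sq_le_sq' (by nlinarith) (by nlinarith)
  rw [fisherIntegrand, Real.norm_of_nonneg (by positivity), div_le_iff₀ (by positivity)]
  field_simp
  nlinarith

lemma integrableOn_momentIntegrand (hγ : 1 < γ) :
    IntegrableOn (momentIntegrand γ) (Ioi 0) := by
  refine ((integrableOn_inv_one_add_rpow hγ).const_mul γ).mono' ?_ ?_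
  · exact Measurable.aestronglyMeasurable (by unfold momentIntegrand; fun_prop)
  · filter_upwards [ae_restrict_mem measurableSet_Ioi] with x (hx : 0 < x)
    exact norm_momentIntegrand_le (by linarith) hx.le

lemma integrableOn_fisherIntegrand (hγ : 1 < γ) :
    IntegrableOn (fisherIntegrand γ) (Ioi 0) := by
  refine ((integrableOn_inv_one_add_rpow hγ).const_mul (γ ^ 2)).mono' ?_ ?_
  · exact Measurable.aestronglyMeasurable (by unfold fisherIntegrand; fun_prop)
  · filter_upwards [ae_restrict_mem measurableSet_Ioi] with x (hx : 0 < x)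
    exact norm_fisherIntegrand_le hγ.le hx.le

lemma hasDerivAt_fisherPrimitive (hx : 0 < x) :
    HasDerivAt (fisherPrimitive γ)
      (fisherIntegrand γ x - (γ - 1) / 2 * momentIntegrand γ x) x := by
  have ht : 0 < x ^ γ := rpow_pos_of_pos hx γ
  have hpow : HasDerivAt (· ^ γ) (γ * x ^ (γ - 1)) x := hasDerivAt_rpow_const (.inl hx.ne')
  refine (((hasDerivAt_id' x).fun_mul ((hpow.const_mul (1 - γ / 2)).const_add 1)).fun_div
    ((hpow.const_add 1).fun_pow 2) (by positivity)).congr_deriv ?_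
  rw [fisherIntegrand, momentIntegrand, rpow_sub_one hx.ne']
  field_simp
  ring

lemma continuousAt_fisherPrimitive_zero (hγ : 0 < γ) : ContinuousAt (fisherPrimitive γ) 0 := by
  have hpow : ContinuousAt (· ^ γ) (0 : ℝ) := continuousAt_rpow_const 0 γ (.inr hγ.le)
  exact (continuousAt_id.mul (continuousAt_const.add (continuousAt_const.mul hpow))).div
    ((continuousAt_const.add hpow).pow 2) (by simp [zero_rpow hγ.ne'])

lemma tendsto_fisherPrimitive_atTop (hγ : 1 < γ) :
    Tendsto (fisherPrimitive γ) atTop (𝓝 0) := by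
  have hneg : Tendsto (fun x : ℝ => x ^ (-γ)) atTop (𝓝 0) := tendsto_rpow_neg_atTop (by linarith)
  have hlim : Tendsto (fun x : ℝ => x ^ (-(γ - 1)) * ((x ^ (-γ) + (1 - γ / 2)) / (x ^ (-γ) + 1) ^ 2))
      atTop (𝓝 (0 * ((0 + (1 - γ / 2)) / (0 + 1) ^ 2))) :=
    (tendsto_rpow_neg_atTop (by linarith)).mul
      ((hneg.add_const _).div ((hneg.add_const 1).pow 2) (by norm_num))
  rw [zero_mul] at hlim
  refine hlim.congr' ?_
  filter_upwards [eventually_gt_atTop 0] with x hx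
  have ht : 0 < x ^ γ := rpow_pos_of_pos hx γ
  rw [fisherPrimitive, neg_sub, rpow_sub hx, rpow_neg hx.le, rpow_one]
  field_simp

lemma integral_fisherIntegrand (hγ : 1 < γ) :
    ∫ x in Ioi 0, fisherIntegrand γ x = (γ - 1) / 2 * ∫ x in Ioi 0, momentIntegrand γ x := by
  have hint := integrableOn_momentIntegrand hγ
  have hFTC := integral_Ioi_of_hasDerivAt_of_tendsto
    (continuousAt_fisherPrimitive_zero (by linarith)).continuousWithinAt
    (fun x hx => hasDerivAt_fisherPrimitive hx)
    ((integrableOn_fisherIntegrand hγ).sub (hint.const_mul _)) (tendsto_fisherPrimitive_atTop hγ)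
  rw [integral_sub (integrableOn_fisherIntegrand hγ) (hint.const_mul _), integral_const_mul,
    show fisherPrimitive γ 0 = 0 by simp [fisherPrimitive], sub_zero, sub_eq_zero] at hFTC
  exact hFTC

lemma integral_momentIntegrand_pos (hγ : 1 < γ) : 0 < ∫ x in Ioi 0, momentIntegrand γ x := by
  have hpos : ∀ x ∈ Ioi (0 : ℝ), 0 < momentIntegrand γ x := fun x (hx : 0 < x) => by
    have : 0 < x ^ γ := rpow_pos_of_pos hx γ
    unfold momentIntegrand
    positivity
  rw [setIntegral_pos_iff_support_of_nonneg_ae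
    ((ae_restrict_iff' measurableSet_Ioi).2 (ae_of_all _ fun x hx => (hpos x hx).le))
    (integrableOn_momentIntegrand hγ),
    inter_eq_right.2 fun x hx => Function.mem_support.2 (hpos x hx).ne']
  simp

lemma hasDerivAt_one_div_one_add_rpow (hx : 0 < x) :
    HasDerivAt (fun x => 1 / (1 + x ^ γ)) (-(γ * x ^ (γ - 1)) / (1 + x ^ γ) ^ 2) x := by
  have : 0 < x ^ γ := rpow_pos_of_pos hx γ
  simpa only [one_div] using
    ((hasDerivAt_rpow_const (.inl hx.ne')).const_add 1).fun_inv (by positivity)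

end LogLogistic

open LogLogistic

/-- For the log-logistic density with `γ > 1` and survival function `Ḡ₀(t) = 1/(1+t^γ)`,
the Fisher information for scale of the current-duration density `f₂(x) = Ḡ₀(x)/μ`
equals `(γ−1)/2`. -/
theorem stmt14 (γ : ℝ) (hγ : 1 < γ)
    (g₀ : ℝ → ℝ) (hg₀ : ∀ t > (0:ℝ), g₀ t = γ * t ^ (γ - 1) / (1 + t ^ γ) ^ 2)
    (μ : ℝ) (hμ : μ = ∫ t in Ioi (0:ℝ), t * g₀ t)
    (f₂ f₂' : ℝ → ℝ) (hf₂ : ∀ x, f₂ x = (1 / (1 + x ^ γ)) / μ)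
    (hderiv : ∀ x ∈ Ioi (0:ℝ), HasDerivAt f₂ (f₂' x) x) :
    ∫ x in Ioi (0:ℝ), (1 + x * f₂' x / f₂ x) ^ 2 * f₂ x = (γ - 1) / 2 := by
  have hmean : μ = ∫ x in Ioi 0, momentIntegrand γ x :=
    hμ.trans <| setIntegral_congr_fun measurableSet_Ioi fun t (ht : 0 < t) => by
      rw [hg₀ t ht, momentIntegrand, rpow_sub_one ht.ne']
      field_simp
  have hμ0 : μ ≠ 0 := hmean ▸ (integral_momentIntegrand_pos hγ).ne'
  have hf₂' : ∀ x ∈ Ioi (0:ℝ), f₂' x = -(γ * x ^ (γ - 1)) / (1 + x ^ γ) ^ 2 / μ :=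
    fun x hx => (hderiv x hx).unique <| funext hf₂ ▸ (hasDerivAt_one_div_one_add_rpow hx).div_const μ
  calc ∫ x in Ioi 0, (1 + x * f₂' x / f₂ x) ^ 2 * f₂ x
      = ∫ x in Ioi 0, fisherIntegrand γ x / μ :=
        setIntegral_congr_fun measurableSet_Ioi fun x (hx : 0 < x) => by
          have : 0 < x ^ γ := rpow_pos_of_pos hx γ
          rw [hf₂' x hx, hf₂, fisherIntegrand, rpow_sub_one hx.ne']
          field_simp
          ring
    _ = (γ - 1) / 2 := by
        rw [integral_div, integral_fisherIntegrand hγ, ← hmean]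
        field_simp
end

section
/- In the AFT model T = e^{−θᵀW}V with covariate density h, the length-biased sampled pair (D,Z) has joint density f_{D,Z}(y,z) = e^{θᵀz} y g₀(e^{θᵀz} y) h(z) / (E[V] · E[e^{−θᵀW}]); consequently the marginal density of Z is f_Z(z) = e^{−θᵀz} h(z)/E[e^{−θᵀW}] and the conditional density of D given Z = z is f_{D|Z}(y|z) = e^{2θᵀz} y g₀(e^{θᵀz} y)/E[V]. In particular the marginal of Z does not depend on g₀. -/
open MeasureTheory Set Real

theorem integral_Ioi_mul_mul_comp_mul_left (g : ℝ → ℝ) {c : ℝ} (hc : 0 < c) :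
    ∫ y in Ioi (0:ℝ), c * y * g (c * y) = c⁻¹ * ∫ v in Ioi (0:ℝ), v * g v := by
  simpa using integral_comp_mul_left_Ioi (fun v => v * g v) 0 hc

theorem stmt16_general (k : ℕ) (θ : Fin k → ℝ)
    (g₀ : ℝ → ℝ)
    (EV : ℝ) (hEV : EV = ∫ v in Ioi (0:ℝ), v * g₀ v) (hEVpos : 0 < EV)
    (h : (Fin k → ℝ) → ℝ)
    (Eew : ℝ) (hEewpos : 0 < Eew)
    (fDZ : ℝ → (Fin k → ℝ) → ℝ)
    (hfDZ : ∀ y z, fDZ y z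
      = Real.exp (∑ i, θ i * z i) * y * g₀ (Real.exp (∑ i, θ i * z i) * y) * h z
          / (EV * Eew)) :
    (∀ z, ∫ y in Ioi (0:ℝ), fDZ y z = Real.exp (-(∑ i, θ i * z i)) * h z / Eew)
    ∧ (∀ z, h z ≠ 0 → ∀ y,
        fDZ y z / (Real.exp (-(∑ i, θ i * z i)) * h z / Eew)
          = Real.exp (2 * ∑ i, θ i * z i) * y
              * g₀ (Real.exp (∑ i, θ i * z i) * y) / EV) := by
  refine ⟨fun z => ?_, fun z hz y => ?_⟩
  · simp_rw [hfDZ]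
    rw [integral_div, integral_mul_const,
      integral_Ioi_mul_mul_comp_mul_left g₀ (exp_pos _), ← hEV, exp_neg]
    field_simp
  · rw [hfDZ, exp_neg, two_mul, exp_add]
    field_simp

/-- Length-biased sampling from the AFT model: the joint density
`f_{D,Z}(y,z) = e^(θᵀz) y g₀(e^(θᵀz) y) h(z) / (E[V]·E[e^(−θᵀW)])` has marginal
`f_Z(z) = e^(−θᵀz) h(z)/E[e^(−θᵀW)]` (which does not depend on `g₀`) and conditional
`f_{D|Z}(y|z) = e^(2θᵀz) y g₀(e^(θᵀz) y)/E[V]`. -/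
theorem stmt16 (k : ℕ) (θ : Fin k → ℝ)
    (g₀ : ℝ → ℝ) (hg₀0 : ∀ x, 0 ≤ g₀ x) (hg₀supp : ∀ x ≤ 0, g₀ x = 0)
    (hg₀1 : ∫ x in Ioi (0:ℝ), g₀ x = 1)
    (EV : ℝ) (hEV : EV = ∫ v in Ioi (0:ℝ), v * g₀ v) (hEVpos : 0 < EV)
    (hEVint : IntegrableOn (fun v => v * g₀ v) (Ioi 0))
    (h : (Fin k → ℝ) → ℝ) (hh0 : ∀ z, 0 ≤ h z) (hh1 : ∫ z, h z = 1)
    (Eew : ℝ) (hEew : Eew = ∫ z, Real.exp (-(∑ i, θ i * z i)) * h z) (hEewpos : 0 < Eew)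
    (fDZ : ℝ → (Fin k → ℝ) → ℝ)
    (hfDZ : ∀ y z, fDZ y z
      = Real.exp (∑ i, θ i * z i) * y * g₀ (Real.exp (∑ i, θ i * z i) * y) * h z
          / (EV * Eew)) :
    (∀ z, ∫ y in Ioi (0:ℝ), fDZ y z = Real.exp (-(∑ i, θ i * z i)) * h z / Eew)
    ∧ (∀ z, h z ≠ 0 → ∀ y,
        fDZ y z / (Real.exp (-(∑ i, θ i * z i)) * h z / Eew)
          = Real.exp (2 * ∑ i, θ i * z i) * y
              * g₀ (Real.exp (∑ i, θ i * z i) * y) / EV) :=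
  stmt16_general k θ g₀ EV hEV hEVpos h Eew hEewpos fDZ hfDZ
end
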